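/- arXiv:1801.08818 — 2 statements merged into one kernel-verified Lean document; each statement's English description precedes it below -/
import Mathlib

section
/- Let n ≥ 2 be an integer and let h ∈ Ċ_c^∞(ℝⁿ). Define H : ℝⁿ → ℝ by H(X) = |X|^{2−2n} h(X/|X|²) for X ≠ 0 and H(0) = 0. Then for every x ∈ ℝⁿ with x ≠ 0, (RH)(x/|x|, 1/(2|x|)) = ω_{n−1} |x|^{n−1} (Mh)(x, |x|). -/
open MeasureTheory Real Set
open scoped ENNReal NNReal MeasureTheory

noncomputable section

abbrev En (n : ℕ) : Type := EuclideanSpace ℝ (Fin n)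

/-- `f` is smooth, compactly supported, and vanishes on a neighborhood of the origin. -/
def SmoothCpt0 (n : ℕ) (f : En n → ℝ) : Prop :=
  ContDiff ℝ (⊤ : ℕ∞) f ∧ HasCompactSupport f ∧ (0 : En n) ∉ tsupport f

/-- The Laplacian of `h` at `x` (sum of second derivatives along coordinate directions). -/
def lap (n : ℕ) (h : En n → ℝ) (x : En n) : ℝ :=
  ∑ i : Fin n, iteratedDeriv 2 (fun s : ℝ => h (x + s • EuclideanSpace.single i (1 : ℝ))) 0

/-- `u` is a smooth solution of the wave equation `∂²u/∂t² = Δu` on `ℝⁿ × ℝ`. -/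
def IsWaveSol (n : ℕ) (u : En n × ℝ → ℝ) : Prop :=
  ContDiff ℝ (⊤ : ℕ∞) u ∧
    ∀ (x : En n) (t : ℝ),
      iteratedDeriv 2 (fun τ : ℝ => u (x, τ)) t = lap n (fun y => u (y, t)) x

/-- The Radon transform: integral of `h` over the hyperplane `{x | x·θ = s}` with respect
to `(n-1)`-dimensional Hausdorff measure. -/
def Radon (n : ℕ) (h : En n → ℝ) (θ : En n) (s : ℝ) : ℝ :=
  ∫ x in {x : En n | (inner ℝ x θ : ℝ) = s}, h x ∂(μH[(n : ℝ) - 1])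

/-- Surface area of the unit sphere `S^{n-1} ⊆ ℝⁿ`, `ω_{n-1} = 2 π^{n/2} / Γ(n/2)`. -/
def sphereArea (n : ℕ) : ℝ := 2 * Real.pi ^ ((n : ℝ) / 2) / Real.Gamma ((n : ℝ) / 2)

/-- Spherical mean of `h` over the sphere of center `c` and radius `t`. -/
def sphMean (n : ℕ) (h : En n → ℝ) (c : En n) (t : ℝ) : ℝ :=
  (sphereArea n)⁻¹ * ∫ θ in Metric.sphere (0 : En n) 1, h (c + t • θ) ∂(μH[(n : ℝ) - 1])

/-- The radial derivative `(∂_r h)(x) = (x/|x|) · ∇h(x)`. -/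
def radialDeriv (n : ℕ) (h : En n → ℝ) (x : En n) : ℝ :=
  fderiv ℝ h x (‖x‖⁻¹ • x)

/-- Lebesgue measure with density `|x|⁻²`. -/
def wMeasInv (n : ℕ) : Measure (En n) :=
  volume.withDensity fun x => ENNReal.ofReal ((‖x‖ ^ 2)⁻¹)

/-- Lebesgue measure with density `|x|²`. -/
def wMeas (n : ℕ) : Measure (En n) :=
  volume.withDensity fun x => ENNReal.ofReal (‖x‖ ^ 2)

/-- The adjoint `U*` of `U`: `(U*φ)(x) = (1/(2(-2π)^m |x|^{m-1})) (∂_s^m R φ_*)(x/|x|, |x|/2)`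
where `φ_*(y) = φ(y)/|y|`. -/
def Ustar (n m : ℕ) (φ : En n → ℝ) (x : En n) : ℝ :=
  (1 / (2 * (-2 * Real.pi) ^ m * ‖x‖ ^ (m - 1))) *
    iteratedDeriv m (fun s => Radon n (fun y => φ y / ‖y‖) (‖x‖⁻¹ • x) s) (‖x‖ / 2)

/-- The adjoint `V*` of `V`: `(V*φ)(x) = (1/(4(-2π)^m |x|^{m+1})) (∂_s^m R φ*)(x/|x|, |x|/2)`
where `φ*(y) = |y| φ(y)`. -/
def Vstar (n m : ℕ) (φ : En n → ℝ) (x : En n) : ℝ :=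
  (1 / (4 * (-2 * Real.pi) ^ m * ‖x‖ ^ (m + 1))) *
    iteratedDeriv m (fun s => Radon n (fun y => ‖y‖ * φ y) (‖x‖⁻¹ • x) s) (‖x‖ / 2)

/-- The operator `D : ψ ↦ ρ² ∂ψ/∂ρ` acting on functions of the radial variable. -/
def radOp (ψ : ℝ → ℝ) (ρ : ℝ) : ℝ := ρ ^ 2 * deriv ψ ρ

namespace Stmt14Aux

open scoped Pointwise

variable {n : ℕ}

/-- inversion map -/
def iv (X : En n) : En n := (‖X‖ ^ 2)⁻¹ • X

@[simp] lemma iv_zero : iv (0 : En n) = 0 := by simp [iv]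

lemma norm_iv {X : En n} (hX : X ≠ 0) : ‖iv X‖ = ‖X‖⁻¹ := by
  have h0 : 0 < ‖X‖ := norm_pos_iff.mpr hX
  rw [iv, norm_smul]
  simp [abs_of_pos, h0, pow_two]
  field_simp

lemma iv_invol (X : En n) : iv (iv X) = X := by
  rcases eq_or_ne X 0 with rfl | hX
  · simp
  · have h0 : 0 < ‖X‖ := norm_pos_iff.mpr hX
    rw [iv, norm_iv hX, iv, smul_smul]
    rw [show ((‖X‖⁻¹ ^ 2)⁻¹ * (‖X‖ ^ 2)⁻¹ : ℝ) = 1 by field_simp]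
    simp

lemma iv_image (s : Set (En n)) : iv '' s = iv ⁻¹' s := by
  ext y
  constructor
  · rintro ⟨X, hX, rfl⟩
    simpa [Set.mem_preimage, iv_invol] using hX
  · intro hy
    exact ⟨iv y, hy, iv_invol y⟩

lemma measurable_iv : Measurable (iv : En n → En n) := by
  unfold iv; fun_prop

lemma inner_iv_left (a b : En n) : (inner ℝ (iv a) b : ℝ) = (‖a‖ ^ 2)⁻¹ * inner ℝ a b := by
  rw [iv, real_inner_smul_left]

lemma dist_iv {a b : En n} (ha : a ≠ 0) (hb : b ≠ 0) :
    dist (iv a) (iv b) = dist a b / (‖a‖ * ‖b‖) := by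
  have ha0 : 0 < ‖a‖ := norm_pos_iff.mpr ha
  have hb0 : 0 < ‖b‖ := norm_pos_iff.mpr hb
  have hsq : ‖iv a - iv b‖ ^ 2 = (‖a - b‖ / (‖a‖ * ‖b‖)) ^ 2 := by
    rw [div_pow, norm_sub_sq_real, norm_sub_sq_real]
    rw [norm_iv ha, norm_iv hb]
    have : (inner ℝ (iv a) (iv b) : ℝ) = (‖a‖ ^ 2)⁻¹ * ((‖b‖ ^ 2)⁻¹ * inner ℝ a b) := by
      rw [inner_iv_left]
      congr 1
      rw [iv, real_inner_smul_right]
    rw [this]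
    field_simp
    ring
  have h1 : ‖iv a - iv b‖ = ‖a - b‖ / (‖a‖ * ‖b‖) := by
    have := congrArg Real.sqrt hsq
    rwa [Real.sqrt_sq (norm_nonneg _), Real.sqrt_sq (by positivity)] at this
  simpa [dist_eq_norm] using h1

/-- iv is Lipschitz on the complement of a ball. -/
lemma lipOn {r : ℝ} (hr : 0 < r) :
    LipschitzOnWith ((r⁻¹ ^ 2).toNNReal) (iv : En n → En n) {X | r ≤ ‖X‖} := by
  apply LipschitzOnWith.of_dist_le_mul
  intro a ha b hb
  simp only [Set.mem_setOf_eq] at ha hb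
  have ha' : a ≠ 0 := fun h => by rw [h, norm_zero] at ha; linarith
  have hb' : b ≠ 0 := fun h => by rw [h, norm_zero] at hb; linarith
  rw [dist_iv ha' hb', Real.coe_toNNReal _ (by positivity)]
  have h1 : r * r ≤ ‖a‖ * ‖b‖ := mul_le_mul ha hb (le_of_lt hr) (norm_nonneg _)
  calc dist a b / (‖a‖ * ‖b‖) ≤ dist a b / (r * r) :=
        div_le_div_of_nonneg_left dist_nonneg (by positivity) h1
    _ = r⁻¹ ^ 2 * dist a b := by rw [pow_two]; field_simp


lemma rpow_helper {r : ℝ} (hr : 0 < r) (d : ℝ) : (r⁻¹ ^ 2) ^ d = r ^ (-(2 * d)) := by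
  have h1 : r⁻¹ ^ 2 = r ^ (-2 : ℝ) := by
    rw [inv_pow, ← Real.rpow_natCast r 2, ← Real.rpow_neg hr.le]
    norm_num
  rw [h1, ← Real.rpow_mul hr.le]
  ring_nf

lemma rpow_helper' {r : ℝ} (hr : 0 < r) (d : ℝ) : (r ^ 2) ^ d = r ^ (2 * d) := by
  rw [← Real.rpow_natCast r 2, ← Real.rpow_mul hr.le]
  norm_num

lemma const_prod {r c : ℝ} (hr : 0 < r) (hc : 0 < c) (e : ℝ) :
    r ^ (-e) * (c * r) ^ e = c ^ e := by
  rw [Real.mul_rpow hc.le hr.le, mul_comm (c ^ e) (r ^ e), ← mul_assoc,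
    ← Real.rpow_add hr]
  simp

lemma ofReal_prod_one {x : ℝ} (hx : 0 < x) (e : ℝ) :
    ENNReal.ofReal (x ^ e) * ENNReal.ofReal (x ^ (-e)) = 1 := by
  rw [← ENNReal.ofReal_mul (by positivity), ← Real.rpow_add hx]
  simp

lemma shell_ineq (d : ℝ) (hd : 0 ≤ d) {c r : ℝ} (hr : 0 < r) (hc : 1 < c)
    {A : Set (En n)} (hA : MeasurableSet A) (hsub : A ⊆ {X | r ≤ ‖X‖ ∧ ‖X‖ < c * r}) :
    μH[d] (iv '' A) ≤
        ENNReal.ofReal (c ^ (2 * d)) * ∫⁻ X in A, ENNReal.ofReal (‖X‖ ^ (-(2 * d))) ∂μH[d] ∧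
      (∫⁻ X in A, ENNReal.ofReal (‖X‖ ^ (-(2 * d))) ∂μH[d]) ≤
        ENNReal.ofReal (c ^ (2 * d)) * μH[d] (iv '' A) := by
  have hc0 : 0 < c := lt_trans one_pos hc
  have hcr : 0 < c * r := by positivity
  -- Lipschitz constant coercions
  have hco : ∀ x : ℝ, 0 ≤ x → (((x).toNNReal : ℝ≥0∞)) = ENNReal.ofReal x := fun x hx => rfl
  -- upper bound for measure of image
  have L1 : μH[d] (iv '' A) ≤ ENNReal.ofReal (r ^ (-(2 * d))) * μH[d] A := by
    have := ((lipOn (n := n) hr).mono (fun X hX => (hsub hX).1)).hausdorffMeasure_image_le hd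
    rwa [hco _ (by positivity), ENNReal.ofReal_rpow_of_pos (by positivity),
      rpow_helper hr] at this
  -- A = iv '' (iv '' A)
  have hAiv : iv '' (iv '' A) = A := by
    rw [Set.image_image]; simp [iv_invol]
  have himgsub : iv '' A ⊆ {Y : En n | (c * r)⁻¹ ≤ ‖Y‖} := by
    rintro Y ⟨X, hX, rfl⟩
    have hX0 : X ≠ 0 := by
      intro h
      have := (hsub hX).1
      rw [h, norm_zero] at this
      linarith
    have h2 : ‖X‖ ≤ c * r := ((hsub hX).2).le
    have h3 : 0 < ‖X‖ := lt_of_lt_of_le hr (hsub hX).1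
    simp only [Set.mem_setOf_eq, norm_iv hX0]
    exact inv_anti₀ h3 h2
  -- lower bound for measure of image
  have L2 : μH[d] A ≤ ENNReal.ofReal ((c * r) ^ (2 * d)) * μH[d] (iv '' A) := by
    have := ((lipOn (n := n) (inv_pos.mpr hcr)).mono himgsub).hausdorffMeasure_image_le hd
    rw [hAiv] at this
    rwa [hco _ (by positivity), ENNReal.ofReal_rpow_of_pos (by positivity), inv_inv,
      rpow_helper' hcr] at this
  -- integrand bounds
  have Iup : (∫⁻ X in A, ENNReal.ofReal (‖X‖ ^ (-(2 * d))) ∂μH[d]) ≤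
      ENNReal.ofReal (r ^ (-(2 * d))) * μH[d] A := by
    rw [← setLIntegral_const A _]
    refine setLIntegral_mono' hA fun X hX => ?_
    have h1 : r ≤ ‖X‖ := (hsub hX).1
    exact ENNReal.ofReal_le_ofReal (Real.rpow_le_rpow_of_nonpos hr h1 (by linarith))
  have Ilow : ENNReal.ofReal ((c * r) ^ (-(2 * d))) * μH[d] A ≤
      ∫⁻ X in A, ENNReal.ofReal (‖X‖ ^ (-(2 * d))) ∂μH[d] := by
    rw [← setLIntegral_const A _]
    refine setLIntegral_mono' hA fun X hX => ?_
    have h2 : ‖X‖ ≤ c * r := ((hsub hX).2).le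
    have h3 : 0 < ‖X‖ := lt_of_lt_of_le hr (hsub hX).1
    exact ENNReal.ofReal_le_ofReal (Real.rpow_le_rpow_of_nonpos h3 h2 (by linarith))
  have hmulAssoc : ∀ a b x : ℝ≥0∞, a * b * x = a * (b * x) := fun a b x => mul_assoc a b x
  have key1 : μH[d] A ≤ ENNReal.ofReal ((c * r) ^ (2 * d)) *
      ∫⁻ X in A, ENNReal.ofReal (‖X‖ ^ (-(2 * d))) ∂μH[d] := by
    calc μH[d] A = ENNReal.ofReal ((c * r) ^ (2 * d)) *
          (ENNReal.ofReal ((c * r) ^ (-(2 * d))) * μH[d] A) := by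
          rw [← mul_assoc, ofReal_prod_one hcr, one_mul]
      _ ≤ _ := mul_le_mul_right Ilow _
  constructor
  · calc μH[d] (iv '' A) ≤ ENNReal.ofReal (r ^ (-(2 * d))) * μH[d] A := L1
      _ ≤ ENNReal.ofReal (r ^ (-(2 * d))) * (ENNReal.ofReal ((c * r) ^ (2 * d)) *
            ∫⁻ X in A, ENNReal.ofReal (‖X‖ ^ (-(2 * d))) ∂μH[d]) := mul_le_mul_right key1 _
      _ = ENNReal.ofReal (c ^ (2 * d)) * ∫⁻ X in A, ENNReal.ofReal (‖X‖ ^ (-(2 * d))) ∂μH[d] := by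
          rw [← mul_assoc, ← ENNReal.ofReal_mul (by positivity), const_prod hr hc0]
  · calc (∫⁻ X in A, ENNReal.ofReal (‖X‖ ^ (-(2 * d))) ∂μH[d]) ≤
          ENNReal.ofReal (r ^ (-(2 * d))) * μH[d] A := Iup
      _ ≤ ENNReal.ofReal (r ^ (-(2 * d))) *
            (ENNReal.ofReal ((c * r) ^ (2 * d)) * μH[d] (iv '' A)) := mul_le_mul_right L2 _
      _ = ENNReal.ofReal (c ^ (2 * d)) * μH[d] (iv '' A) := by
          rw [← mul_assoc, ← ENNReal.ofReal_mul (by positivity), const_prod hr hc0]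


lemma global_bounds (d : ℝ) (hd : 0 ≤ d) {c : ℝ} (hc : 1 < c)
    {A : Set (En n)} (hA : MeasurableSet A) (hA0 : (0 : En n) ∉ A) :
    μH[d] (iv '' A) ≤
        ENNReal.ofReal (c ^ (2 * d)) * ∫⁻ X in A, ENNReal.ofReal (‖X‖ ^ (-(2 * d))) ∂μH[d] ∧
      (∫⁻ X in A, ENNReal.ofReal (‖X‖ ^ (-(2 * d))) ∂μH[d]) ≤
        ENNReal.ofReal (c ^ (2 * d)) * μH[d] (iv '' A) := by
  have hc0 : 0 < c := lt_trans one_pos hc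
  set Ak : ℤ → Set (En n) := fun k => A ∩ ((fun X : En n => ‖X‖) ⁻¹' Set.Ico (c ^ k) (c ^ (k + 1)))
    with hAk
  have hAkm : ∀ k, MeasurableSet (Ak k) := fun k =>
    hA.inter (measurable_norm (measurableSet_Ico))
  have hUnion : (⋃ k, Ak k) = A := by
    ext X
    simp only [hAk, Set.mem_iUnion, Set.mem_inter_iff, Set.mem_preimage, Set.mem_Ico]
    constructor
    · rintro ⟨k, hk, -⟩; exact hk
    · intro hX
      have hX0 : X ≠ 0 := fun h => hA0 (h ▸ hX)
      obtain ⟨k, hk⟩ := exists_mem_Ico_zpow (norm_pos_iff.mpr hX0) hc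
      exact ⟨k, hX, hk⟩
  have hdisj : Pairwise (Function.onFun Disjoint Ak) := by
    intro k l hkl
    have : ∀ k l : ℤ, k < l → Disjoint (Ak k) (Ak l) := by
      intro k l hlt
      rw [Set.disjoint_left]
      rintro X ⟨-, h1, h2⟩ ⟨-, h3, -⟩
      have : c ^ (k + 1) ≤ c ^ l := zpow_le_zpow_right₀ hc.le (by omega)
      linarith
    rcases lt_or_gt_of_ne hkl with h | h
    · exact this k l h
    · exact (this l k h).symm
  have hsubk : ∀ k, Ak k ⊆ {X : En n | c ^ k ≤ ‖X‖ ∧ ‖X‖ < c * c ^ k} := by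
    intro k X hX
    have h := hX.2
    simp only [Set.mem_preimage, Set.mem_Ico] at h
    refine ⟨h.1, ?_⟩
    rw [zpow_add_one₀ (ne_of_gt hc0), mul_comm] at h
    exact h.2
  have hshell := fun k => shell_ineq d hd (zpow_pos hc0 k) hc (hAkm k) (hsubk k)
  have hintsum : (∫⁻ X in A, ENNReal.ofReal (‖X‖ ^ (-(2 * d))) ∂μH[d]) =
      ∑' k : ℤ, ∫⁻ X in Ak k, ENNReal.ofReal (‖X‖ ^ (-(2 * d))) ∂μH[d] := by
    rw [← hUnion, lintegral_iUnion hAkm hdisj]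
  have himg : iv '' A = ⋃ k, iv '' Ak k := by rw [← hUnion, Set.image_iUnion]
  have himgm : ∀ k, MeasurableSet (iv '' Ak k) := fun k => by
    rw [iv_image]; exact measurable_iv (hAkm k)
  have himgdisj : Pairwise (Function.onFun Disjoint fun k => iv '' Ak k) := by
    intro k l hkl
    have := hdisj hkl
    simp only [Function.onFun, iv_image] at this ⊢
    exact Disjoint.preimage iv this
  have hmeassum : μH[d] (iv '' A) = ∑' k : ℤ, μH[d] (iv '' Ak k) := by
    rw [himg, measure_iUnion himgdisj himgm]
  constructor
  · rw [hmeassum, hintsum, ← ENNReal.tsum_mul_left]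
    exact ENNReal.tsum_le_tsum fun k => (hshell k).1
  · rw [hmeassum, hintsum, ← ENNReal.tsum_mul_left]
    exact ENNReal.tsum_le_tsum fun k => (hshell k).2

lemma ennreal_squeeze (e : ℝ) {X Y : ℝ≥0∞}
    (h : ∀ c : ℝ, 1 < c → X ≤ ENNReal.ofReal (c ^ e) * Y) : X ≤ Y := by
  rcases eq_top_or_lt_top Y with hY | hY
  · rw [hY]; exact le_top
  · have h1 : ∀ j : ℕ, X ≤ ENNReal.ofReal ((1 + 1 / (j + 1) : ℝ) ^ e) * Y := fun j =>
      h _ (by nlinarith [(by positivity : (0:ℝ) < 1 / ((j:ℝ) + 1))])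
    have t1 : Filter.Tendsto (fun j : ℕ => (1 + 1 / (j + 1) : ℝ)) Filter.atTop (nhds 1) := by
      have := tendsto_one_div_add_atTop_nhds_zero_nat (𝕜 := ℝ)
      have := this.const_add (1 : ℝ)
      simpa using this
    have t2 : Filter.Tendsto (fun j : ℕ => ((1 + 1 / (j + 1) : ℝ)) ^ e) Filter.atTop (nhds 1) := by
      have := t1.rpow_const (p := e) (Or.inl one_ne_zero)
      simpa using this
    have t3 : Filter.Tendsto (fun j : ℕ => ENNReal.ofReal ((1 + 1 / (j + 1) : ℝ) ^ e))
        Filter.atTop (nhds 1) := by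
      have := ENNReal.tendsto_ofReal t2
      simpa using this
    have t4 := ENNReal.Tendsto.mul_const t3 (Or.inr hY.ne)
    rw [one_mul] at t4
    exact ge_of_tendsto' t4 h1

/-- Key change-of-variables: Hausdorff measure of the image of a set under inversion. -/
lemma key_cov (d : ℝ) (hd : 0 ≤ d) {A : Set (En n)} (hA : MeasurableSet A)
    (hA0 : (0 : En n) ∉ A) :
    μH[d] (iv '' A) = ∫⁻ X in A, ENNReal.ofReal (‖X‖ ^ (-(2 * d))) ∂μH[d] :=
  le_antisymm
    (ennreal_squeeze (2 * d) fun c hc => (global_bounds d hd hc hA hA0).1)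
    (ennreal_squeeze (2 * d) fun c hc => (global_bounds d hd hc hA hA0).2)


lemma map_iv_withDensity (d : ℝ) (hd : 0 < d) {P : Set (En n)} (hP : MeasurableSet P)
    (hP0 : (0 : En n) ∉ P) :
    Measure.map iv (((μH[d] : Measure (En n)).restrict P).withDensity
        (fun X => ENNReal.ofReal (‖X‖ ^ (-(2 * d))))) =
      (μH[d] : Measure (En n)).restrict (iv '' P) := by
  have hivP : MeasurableSet (iv '' P) := by rw [iv_image]; exact measurable_iv hP
  ext B hB
  rw [Measure.map_apply measurable_iv hB, withDensity_apply _ (measurable_iv hB),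
    Measure.restrict_restrict (measurable_iv hB), Measure.restrict_apply hB]
  have hA : MeasurableSet (iv ⁻¹' B ∩ P) := (measurable_iv hB).inter hP
  have hA0 : (0 : En n) ∉ iv ⁻¹' B ∩ P := fun h => hP0 h.2
  rw [← key_cov d hd.le hA hA0]
  congr 1
  rw [iv_image, iv_image, Set.preimage_inter, Set.preimage_preimage]
  congr 1
  ext Y
  simp [iv_invol]

lemma integral_inv_formula (d : ℝ) (hd : 0 < d) {P : Set (En n)} (hP : MeasurableSet P)
    (hP0 : (0 : En n) ∉ P) (h : En n → ℝ) (hcont : Continuous h) :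
    ∫ Y in iv '' P, h Y ∂μH[d] = ∫ X in P, (‖X‖ ^ (-(2 * d)) : ℝ) * h (iv X) ∂μH[d] := by
  rw [← map_iv_withDensity d hd hP hP0,
    integral_map measurable_iv.aemeasurable hcont.aestronglyMeasurable]
  have fmeas : Measurable (fun X : En n => (‖X‖ ^ (-(2 * d))).toNNReal) :=
    (measurable_norm.pow measurable_const).real_toNNReal
  have hdens : (fun X : En n => ENNReal.ofReal (‖X‖ ^ (-(2 * d)))) =
      fun X => ((‖X‖ ^ (-(2 * d))).toNNReal : ℝ≥0∞) := rfl
  rw [hdens, integral_withDensity_eq_integral_smul fmeas]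
  apply setIntegral_congr_fun hP
  intro X _
  dsimp only
  rw [NNReal.smul_def, Real.coe_toNNReal _ (Real.rpow_nonneg (norm_nonneg _) _), smul_eq_mul]

lemma sphere_scale (d : ℝ) (hd : 0 ≤ d) (x : En n) {r : ℝ} (hr : 0 < r)
    (h : En n → ℝ) (hcont : Continuous h) :
    ∫ Y in Metric.sphere x r, h Y ∂μH[d] =
      (r ^ d : ℝ) • ∫ θ in Metric.sphere (0 : En n) 1, h (x + r • θ) ∂μH[d] := by
  set e : En n → En n := fun θ => x + r • θ with he
  have hecont : Continuous e := continuous_const.add (continuous_id.const_smul r)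
  have hemeas : Measurable e := hecont.measurable
  have htrans : Isometry (fun y : En n => x + y) :=
    Isometry.of_dist_eq fun a b => by simp [dist_eq_norm]
  have himg : ∀ A : Set (En n), μH[d] (e '' A) = ENNReal.ofReal (r ^ d) * μH[d] A := by
    intro A
    have h1 : e '' A = (fun y : En n => x + y) '' (r • A) := by
      rw [← Set.image_smul, Set.image_image]
    rw [h1, htrans.hausdorffMeasure_image (Or.inl hd),
      MeasureTheory.Measure.hausdorffMeasure_smul₀ hd (ne_of_gt hr) A]
    have h2 : (‖r‖₊ : ℝ≥0∞) ^ d = ENNReal.ofReal (r ^ d) := by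
      rw [← ENNReal.ofReal_rpow_of_pos hr]
      congr 1
      simp only [ENNReal.ofReal, Real.nnnorm_of_nonneg hr.le]
      rw [Real.toNNReal_of_nonneg hr.le]
    rw [← h2, ENNReal.smul_def, smul_eq_mul, ENNReal.coe_rpow_of_ne_zero (by simp [hr.ne'])]
  have hpre : e ⁻¹' Metric.sphere x r = Metric.sphere (0 : En n) 1 := by
    ext θ
    simp only [Set.mem_preimage, Metric.mem_sphere, he, dist_eq_norm]
    rw [add_sub_cancel_left, norm_smul, Real.norm_of_nonneg hr.le, sub_zero]
    constructor
    · intro hθ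
      exact mul_left_cancel₀ hr.ne' (by rw [hθ, mul_one])
    · intro hθ; rw [hθ, mul_one]
  have hmeq : (μH[d] : Measure (En n)).restrict (Metric.sphere x r) =
      ENNReal.ofReal (r ^ d) • Measure.map e ((μH[d] : Measure (En n)).restrict
        (Metric.sphere (0 : En n) 1)) := by
    ext B hB
    rw [Measure.smul_apply, Measure.map_apply hemeas hB,
      Measure.restrict_apply (hemeas hB), Measure.restrict_apply hB]
    have hbij : Function.Bijective e := by
      constructor
      · intro a b hab
        simp only [he] at hab
        have := add_left_cancel hab
        exact smul_right_injective (En n) hr.ne' this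
      · intro y
        exact ⟨r⁻¹ • (y - x), by simp [he, smul_smul, hr.ne']⟩
    have : B ∩ Metric.sphere x r = e '' (e ⁻¹' B ∩ Metric.sphere (0 : En n) 1) := by
      conv_lhs => rw [← Set.image_preimage_eq (B ∩ Metric.sphere x r) hbij.2]
      rw [Set.preimage_inter, hpre]
    rw [this, himg, smul_eq_mul]
  rw [hmeq, integral_smul_measure,
    integral_map hemeas.aemeasurable hcont.aestronglyMeasurable,
    ENNReal.toReal_ofReal (Real.rpow_nonneg hr.le _)]

end Stmt14Aux

/-- For `n ≥ 2` and `h ∈ Ċ_c^∞(ℝⁿ)`, with `H(X) = |X|^{2-2n} h(X/|X|²)`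
(and `H(0) = 0`), for every `x ≠ 0`,
`(RH)(x/|x|, 1/(2|x|)) = ω_{n-1} |x|^{n-1} (Mh)(x,|x|)`. -/
theorem stmt14 (n : ℕ) (hn : 2 ≤ n)
    (h : En n → ℝ) (hh : SmoothCpt0 n h)
    (H : En n → ℝ) (hH0 : H 0 = 0)
    (hH : ∀ X : En n, X ≠ 0 → H X = (‖X‖ ^ (2 * n - 2))⁻¹ * h ((‖X‖ ^ 2)⁻¹ • X))
    (x : En n) (hx : x ≠ 0) :
    Radon n H (‖x‖⁻¹ • x) ((2 * ‖x‖)⁻¹)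
      = sphereArea n * ‖x‖ ^ (n - 1) * sphMean n h x ‖x‖ := by
  classical
  open Stmt14Aux in
  set d : ℝ := (n : ℝ) - 1 with hd_def
  have hn1 : (1 : ℝ) ≤ (n : ℝ) - 1 := by
    have : (2 : ℝ) ≤ (n : ℝ) := by exact_mod_cast hn
    linarith
  have hd : 0 < d := by rw [hd_def]; linarith
  have hxn : 0 < ‖x‖ := norm_pos_iff.mpr hx
  have hcont : Continuous h := hh.1.continuous
  set P : Set (En n) := {X : En n | (inner ℝ X (‖x‖⁻¹ • x) : ℝ) = (2 * ‖x‖)⁻¹} with hP_def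
  have hPmem : ∀ X : En n, X ∈ P ↔ (inner ℝ X x : ℝ) = 1 / 2 := by
    intro X
    rw [hP_def, Set.mem_setOf_eq, real_inner_smul_right]
    constructor
    · intro hX
      have h2 : (2 * ‖x‖)⁻¹ = ‖x‖⁻¹ * (1 / 2) := by
        rw [mul_inv]; ring
      rw [h2] at hX
      exact mul_left_cancel₀ (inv_ne_zero hxn.ne') hX
    · intro hX
      rw [hX, mul_inv]; ring
  have hP : MeasurableSet P := by
    have : Continuous fun X : En n => (inner ℝ X (‖x‖⁻¹ • x) : ℝ) :=
      continuous_id.inner continuous_const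
    exact (isClosed_eq this continuous_const).measurableSet
  have hP0 : (0 : En n) ∉ P := by
    rw [hPmem]
    simp
  have hPne : ∀ X : En n, X ∈ P → X ≠ 0 := by
    intro X hX h0
    exact hP0 (h0 ▸ hX)
  -- image of P under inversion is the sphere
  have himgP : iv '' P = Metric.sphere x ‖x‖ \ {0} := by
    rw [iv_image]
    ext Y
    rcases eq_or_ne Y 0 with rfl | hY0
    · simp only [Set.mem_preimage, iv_zero, Set.mem_diff, Set.mem_singleton_iff]
      constructor
      · intro h0; exact absurd h0 hP0
      · rintro ⟨-, h0⟩; exact absurd trivial h0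
    · have hY : 0 < ‖Y‖ := norm_pos_iff.mpr hY0
      simp only [Set.mem_preimage, Set.mem_diff, Set.mem_singleton_iff, Metric.mem_sphere]
      rw [hPmem]
      have hinner : (inner ℝ (iv Y) x : ℝ) = (‖Y‖ ^ 2)⁻¹ * inner ℝ Y x := inner_iv_left Y x
      rw [hinner]
      have hiff1 : (‖Y‖ ^ 2)⁻¹ * (inner ℝ Y x : ℝ) = 1 / 2 ↔
          ‖Y‖ ^ 2 - 2 * (inner ℝ Y x : ℝ) = 0 := by
        rw [inv_mul_eq_div, div_eq_iff (by positivity)]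
        constructor <;> intro h1 <;> nlinarith
      rw [hiff1, dist_eq_norm]
      constructor
      · intro h1
        have hsq : ‖Y - x‖ ^ 2 = ‖x‖ ^ 2 := by
          rw [norm_sub_sq_real]; linarith
        have := congrArg Real.sqrt hsq
        rw [Real.sqrt_sq (norm_nonneg _), Real.sqrt_sq (norm_nonneg _)] at this
        exact ⟨this, hY0⟩
      · rintro ⟨h1, -⟩
        have hsq : ‖Y - x‖ ^ 2 = ‖x‖ ^ 2 := by rw [h1]
        rw [norm_sub_sq_real] at hsq
        linarith
  haveI : NullSingletonClass (μH[d] : Measure (En n)) := Measure.nullSingletonClass_hausdorff (En n) hd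
  have step1 : Radon n H (‖x‖⁻¹ • x) ((2 * ‖x‖)⁻¹) = ∫ X in P, H X ∂μH[d] := rfl
  have step2 : (∫ X in P, H X ∂μH[d]) =
      ∫ X in P, (‖X‖ ^ (-(2 * d)) : ℝ) * h (iv X) ∂μH[d] := by
    apply setIntegral_congr_fun hP
    intro X hX
    have hX0 : X ≠ 0 := hPne X hX
    have hXn : 0 < ‖X‖ := norm_pos_iff.mpr hX0
    rw [hH X hX0]
    congr 1
    rw [← Real.rpow_natCast ‖X‖ (2 * n - 2), ← Real.rpow_neg (norm_nonneg _)]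
    congr 1
    have : ((2 * n - 2 : ℕ) : ℝ) = 2 * (n : ℝ) - 2 := by
      have h2n : 2 ≤ 2 * n := by omega
      push_cast [Nat.cast_sub h2n]
      ring
    rw [this, hd_def]
    ring
  have step3 : (∫ X in P, (‖X‖ ^ (-(2 * d)) : ℝ) * h (iv X) ∂μH[d]) =
      ∫ Y in iv '' P, h Y ∂μH[d] :=
    (integral_inv_formula d hd hP hP0 h hcont).symm
  have step4 : (∫ Y in iv '' P, h Y ∂μH[d]) = ∫ Y in Metric.sphere x ‖x‖, h Y ∂μH[d] := by
    rw [himgP]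
    apply setIntegral_congr_set
    have h0 : (μH[d] : Measure (En n)) {(0 : En n)} = 0 := measure_singleton _
    exact diff_null_ae_eq_self h0
  have step5 : (∫ Y in Metric.sphere x ‖x‖, h Y ∂μH[d]) =
      (‖x‖ ^ d : ℝ) • ∫ θ in Metric.sphere (0 : En n) 1, h (x + ‖x‖ • θ) ∂μH[d] :=
    sphere_scale d hd.le x hxn h hcont
  have hSA : sphereArea n ≠ 0 := by
    rw [sphereArea]
    have h1 : 0 < Real.pi ^ ((n : ℝ) / 2) := Real.rpow_pos_of_pos Real.pi_pos _
    have h2 : 0 < Real.Gamma ((n : ℝ) / 2) := Real.Gamma_pos_of_pos (by positivity)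
    positivity
  have hpow : (‖x‖ ^ d : ℝ) = ‖x‖ ^ (n - 1) := by
    rw [hd_def, ← Real.rpow_natCast ‖x‖ (n - 1)]
    congr 1
    have h1n : 1 ≤ n := by omega
    push_cast [Nat.cast_sub h1n]
    ring
  rw [step1, step2, step3, step4, step5, sphMean, hpow, smul_eq_mul]
  field_simp
  ring
end
end

section
/- Let n ≥ 1. For every nonnegative measurable function φ : ℝⁿ → [0,∞], ∫_{ℝⁿ} φ(X) dX = ∫_{ℝⁿ \ {0}} φ(x/|x|²) |x|^{−2n} dx, where dX and dx denote Lebesgue measure on ℝⁿ. Equivalently, the pushforward of Lebesgue measure on ℝⁿ \ {0} under the inversion map x ↦ x/|x|² is the measure |X|^{−2n} dX. -/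
open MeasureTheory Real Set
open scoped ENNReal NNReal MeasureTheory

noncomputable section

/-- Change of variables for the inversion map: for every nonnegative
measurable `φ`, `∫ φ(X) dX = ∫_{ℝⁿ \ {0}} φ(x/|x|²) |x|^{-2n} dx`. -/
theorem stmt18 (n : ℕ) (hn : 1 ≤ n) (φ : En n → ℝ≥0∞) (hφ : Measurable φ) :
    ∫⁻ X : En n, φ X
      = ∫⁻ x in ({0}ᶜ : Set (En n)),
          φ ((‖x‖ ^ 2)⁻¹ • x) * ENNReal.ofReal ((‖x‖ ^ (2 * n))⁻¹) := by
  haveI : Nontrivial (En n) :=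
    ⟨EuclideanSpace.single ⟨0, hn⟩ 1, 0, by
      intro h
      have := congrFun (congrArg (fun v : En n => (v : Fin n → ℝ)) h) ⟨0, hn⟩
      simp [EuclideanSpace.single_apply] at this⟩
  set f : En n → En n := fun x => (‖x‖ ^ 2)⁻¹ • x with hfdef
  have hfeq : f = EuclideanGeometry.inversion (0 : En n) 1 := by
    funext x
    simp [EuclideanGeometry.inversion_def, f, div_pow, dist_eq_norm]
  have hff : ∀ x : En n, f (f x) = x := by
    intro x
    rw [hfeq]
    exact EuclideanGeometry.inversion_inversion (0 : En n) one_ne_zero x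
  have hfne : ∀ x : En n, x ≠ 0 → f x ≠ 0 := by
    intro x hx
    exact smul_ne_zero (inv_ne_zero (pow_ne_zero _ (norm_ne_zero_iff.2 hx))) hx
  set f' : En n → En n →L[ℝ] En n := fun x =>
    ((1 / ‖x‖) ^ 2) • (Submodule.reflection (ℝ ∙ x)ᗮ : En n →L[ℝ] En n) with hf'def
  have hderiv : ∀ x ∈ ({0}ᶜ : Set (En n)), HasFDerivWithinAt f (f' x) ({0}ᶜ) x := by
    intro x hx
    have hx0 : x ≠ 0 := hx
    have := EuclideanGeometry.hasFDerivAt_inversion (c := (0 : En n)) (R := 1) hx0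
    rw [← hfeq] at this
    simpa [f', dist_eq_norm] using this.hasFDerivWithinAt
  have hinj : Set.InjOn f ({0}ᶜ : Set (En n)) := by
    intro a _ b _ hab
    have := congrArg f hab
    rwa [hff, hff] at this
  have himg : f '' ({0}ᶜ : Set (En n)) = ({0}ᶜ : Set (En n)) := by
    ext y
    constructor
    · rintro ⟨x, hx, rfl⟩
      exact hfne x hx
    · intro hy
      exact ⟨f y, hfne y hy, hff y⟩
  have hdet : ∀ x : En n, x ≠ 0 →
      ENNReal.ofReal |(f' x).det| = ENNReal.ofReal ((‖x‖ ^ (2 * n))⁻¹) := by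
    intro x hx
    have hrefl : LinearMap.det (Submodule.reflection (ℝ ∙ x)ᗮ).toLinearMap
        = (-1 : ℝ) ^ Module.finrank ℝ (ℝ ∙ x)ᗮᗮ := Submodule.det_reflection _
    have hbot : (ℝ ∙ x)ᗮᗮ = (ℝ ∙ x) := Submodule.orthogonal_orthogonal _
    have hrank1 : Module.finrank ℝ (ℝ ∙ x : Submodule ℝ (En n)) = 1 :=
      finrank_span_singleton hx
    have hdet' : (f' x).det = ((1 / ‖x‖) ^ 2) ^ n * (-1 : ℝ) := by
      have h1 : (f' x : En n →ₗ[ℝ] En n)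
          = ((1 / ‖x‖) ^ 2) • (Submodule.reflection (ℝ ∙ x)ᗮ).toLinearMap := rfl
      show LinearMap.det (f' x : En n →ₗ[ℝ] En n) = _
      rw [h1, LinearMap.det_smul, finrank_euclideanSpace_fin, Submodule.det_reflection,
        hbot, hrank1, pow_one]
    rw [hdet']
    congr 1
    rw [abs_mul, abs_neg, abs_one, mul_one, abs_pow, abs_pow, abs_div, abs_one, abs_norm]
    rw [one_div, inv_pow, inv_pow, ← pow_mul]
  have h0 : ∫⁻ X : En n, φ X = ∫⁻ X in ({0}ᶜ : Set (En n)), φ X := by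
    rw [← setLIntegral_univ]
    refine setLIntegral_congr ?_
    rw [Filter.eventuallyEq_set]
    filter_upwards [measure_eq_zero_iff_ae_notMem.1 (measure_singleton (0 : En n))] with a ha
    simp only [Set.mem_univ, Set.mem_compl_iff, Set.mem_singleton_iff, true_iff]
    exact ha
  have key := lintegral_image_eq_lintegral_abs_det_fderiv_mul volume
      (MeasurableSet.singleton (0 : En n)).compl hderiv hinj φ
  rw [h0]
  conv_lhs => rw [← himg, key]
  refine setLIntegral_congr_fun (MeasurableSet.singleton (0 : En n)).compl
    (fun x hx => ?_)
  rw [hdet x hx, mul_comm]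
end
end
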